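/- arXiv:2412.01190 — 4 statements merged into one kernel-verified Lean document; each statement's English description precedes it below -/
import Mathlib

section
/- Let (X,d) be a metric space, K ∈ ℝ, E: X → ℝ ∪ {+∞} lower semi-continuous, and (y_t)_{t>0} a locally absolutely continuous curve with y_t → y₀ as t→0. If for all z with E(z) < ∞ and a.e. t > 0 one has (1/2)(d/dt)d²(y_t,z) + (K/2)d²(y_t,z) ≤ E(z) − E(y_t), then for all 0 ≤ s ≤ t and all such z: (e^{K(t−s)}/2)d²(y_t,z) − (1/2)d²(y_s,z) ≤ I_K(t−s)(E(z) − E(y_t)), where I_K(r) = ∫₀^r e^{Ku} du. -/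
/-!
Write `D r = d²(y r, z)`. The hypothesis says that `D' + K D ≤ 2 (E z - E (y r))` almost
everywhere, i.e. `(e^{K r} D)' ≤ 2 e^{K r} (E z - E (y r))`, and integrating this over `[s, t]`
gives the claim as soon as `E (y r) ≥ E (y t)` for `r ≤ t`. So the heart of the matter is that
`E ∘ y` is nonincreasing. Taking `z = y τ`, if `E ∘ y` stayed strictly above `E (y τ)` on
`(τ, b]`, the same integration would give `e^{K (b - τ)} d²(y b, y τ) ≤ 0`, hence `y b = y τ`;
lower semicontinuity of `E` lets one apply this at the last time `τ ≤ b` with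
`E (y τ) ≤ E (y a)`. The case `s = 0` follows by continuity of `y` at `0`.
-/

open MeasureTheory Set

theorem integral_exp_mul_add_primitive {g : ℝ → ℝ} {a b : ℝ}
    (hg : IntervalIntegrable g volume a b) (K c : ℝ) :
    ∫ x in a..b, Real.exp (K * (x - a)) * (g x + K * (c + ∫ t in a..x, g t)) =
      Real.exp (K * (b - a)) * (c + ∫ t in a..b, g t) - c := by
  set w : ℝ → ℝ := fun x => Real.exp (K * (x - a))
  set G : ℝ → ℝ := fun x => c + ∫ t in a..x, g t
  have hw : ∀ x, HasDerivAt w (K * w x) x := fun x => by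
    simpa [w, mul_comm] using ((hasDerivAt_id x).sub_const a |>.const_mul K).exp
  have hwAC : AbsolutelyContinuousOnInterval w a b :=
    ContDiffOn.absolutelyContinuousOnInterval (by fun_prop)
  have hGAC : AbsolutelyContinuousOnInterval G a b :=
    (ContDiffOn.absolutelyContinuousOnInterval (f := fun _ => c) contDiffOn_const).add
      (hg.absolutelyContinuousOnInterval_intervalIntegral left_mem_uIcc)
  have hG : ∀ᵐ x, x ∈ uIoc a b → deriv G x = g x := by
    filter_upwards [hg.ae_hasDerivAt_integral] with x hx hxI
    exact ((hx (uIoc_subset_uIcc hxI) a left_mem_uIcc).const_add c).deriv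
  have hIBP := hwAC.integral_deriv_mul_eq_sub hGAC
  rw [show w a * G a = c by simp [w, G]] at hIBP
  refine (intervalIntegral.integral_congr_ae ?_).trans hIBP
  filter_upwards [hG] with x hx hxI
  rw [(hw x).deriv, hx hxI]
  ring

theorem exp_mul_sub_le_of_ae_le {D g : ℝ → ℝ} {K c a b : ℝ} (hab : a ≤ b)
    (hg : IntervalIntegrable g volume a b) (hD : ∀ x ∈ Icc a b, D x = D a + ∫ t in a..x, g t)
    (hle : ∀ᵐ x, x ∈ Ioc a b → g x + K * D x ≤ c) :
    Real.exp (K * (b - a)) * D b - D a ≤ c * ∫ x in 0..(b - a), Real.exp (K * x) := by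
  have hw : Continuous fun x => Real.exp (K * (x - a)) := by fun_prop
  have hG : ContinuousOn (fun x => D a + ∫ t in a..x, g t) (uIcc a b) :=
    continuousOn_const.add (intervalIntegral.continuousOn_primitive_interval' hg left_mem_uIcc)
  calc Real.exp (K * (b - a)) * D b - D a
      = ∫ x in a..b, Real.exp (K * (x - a)) * (g x + K * (D a + ∫ t in a..x, g t)) := by
        rw [integral_exp_mul_add_primitive hg, hD b ⟨hab, le_rfl⟩]
    _ ≤ ∫ x in a..b, Real.exp (K * (x - a)) * c := by
        refine intervalIntegral.integral_mono_ae_restrict hab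
          ((hg.add (hG.const_mul K).intervalIntegrable).continuousOn_mul hw.continuousOn)
          ((hw.mul continuous_const).intervalIntegrable _ _) ?_
        rw [← Measure.restrict_congr_set Ioc_ae_eq_Icc]
        refine (ae_restrict_iff' measurableSet_Ioc).2 ?_
        filter_upwards [hle] with x hx hxI
        rw [← hD x (Ioc_subset_Icc_self hxI)]
        exact mul_le_mul_of_nonneg_left (hx hxI) (Real.exp_pos _).le
    _ = c * ∫ x in 0..(b - a), Real.exp (K * x) := by
        rw [intervalIntegral.integral_mul_const, mul_comm,
          intervalIntegral.integral_comp_sub_right (fun x => Real.exp (K * x)), sub_self]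

theorem exp_mul_sub_le_of_ae_le_of_continuousWithinAt {D g : ℝ → ℝ} {K c s t : ℝ}
    (hD₀ : ContinuousWithinAt D (Ioi 0) 0)
    (hD : ∀ a b, 0 < a → a ≤ b →
      IntervalIntegrable g volume a b ∧ D b - D a = ∫ r in a..b, g r)
    (hle : ∀ᵐ r, r ∈ Ioc 0 t → g r + K * D r ≤ c) (hs : 0 ≤ s) (hst : s < t) :
    Real.exp (K * (t - s)) * D t - D s ≤ c * ∫ r in 0..(t - s), Real.exp (K * r) := by
  have hpos : ∀ a ∈ Ioo 0 t,
      Real.exp (K * (t - a)) * D t - D a ≤ c * ∫ r in 0..(t - a), Real.exp (K * r) := by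
    intro a ⟨ha, hat⟩
    refine exp_mul_sub_le_of_ae_le hat.le (hD a t ha hat.le).1
      (fun x hx => by linarith [(hD a x ha hx.1).2]) ?_
    filter_upwards [hle] with r hr hrI
    exact hr ⟨ha.trans hrI.1, hrI.2⟩
  rcases hs.eq_or_lt with rfl | hs
  · have hI : Continuous fun x => ∫ r in 0..x, Real.exp (K * r) :=
      intervalIntegral.continuous_primitive
        (fun _ _ => (by fun_prop : Continuous fun r => Real.exp (K * r)).intervalIntegrable _ _) 0
    refine ContinuousWithinAt.closure_le (s := Ioo 0 t) ?_ ?_ ?_ hpos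
    · rw [closure_Ioo hst.ne]
      exact ⟨le_rfl, hst.le⟩
    · exact (Continuous.continuousWithinAt (by fun_prop)).sub (hD₀.mono Ioo_subset_Ioi_self)
    · exact Continuous.continuousWithinAt (by fun_prop)
  · exact hpos s ⟨hs, hst⟩

theorem ne_bot_of_ae_coe_le {f : ℝ → ℝ} {B : EReal} {S : Set ℝ} (hS : volume S ≠ 0)
    (h : ∀ᵐ r, r ∈ S → (f r : EReal) ≤ B) : B ≠ ⊥ := by
  rintro rfl
  refine hS (measure_mono_null (fun r hr => ?_) (ae_iff.1 h))
  simpa [le_bot_iff] using hr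

def IsEVISolution {X : Type*} [MetricSpace X] (K : ℝ) (E : X → EReal) (y : ℝ → X) : Prop :=
  ∀ z : X, E z ≠ ⊤ → ∃ g : ℝ → ℝ,
    (∀ s t : ℝ, 0 < s → s ≤ t → IntervalIntegrable g volume s t ∧
      dist (y t) z ^ 2 - dist (y s) z ^ 2 = ∫ r in s..t, g r) ∧
    (∀ᵐ r, 0 < r →
      ((1 / 2 * g r + K / 2 * dist (y r) z ^ 2 : ℝ) : EReal) ≤ E z - E (y r))

namespace IsEVISolution

variable {X : Type*} [MetricSpace X] {K : ℝ} {E : X → EReal} {y : ℝ → X}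

theorem exists_le_of_lt (h : IsEVISolution K E y) {τ b : ℝ} (hτ : 0 < τ) (hτb : τ < b) :
    ∃ v ∈ Ioc τ b, E (y v) ≤ E (y τ) := by
  by_contra! hlt
  obtain ⟨g, hg, hle⟩ := h (y τ) (hlt b ⟨hτb, le_rfl⟩).ne_top
  have hcmp := exp_mul_sub_le_of_ae_le (D := fun r => dist (y r) (y τ) ^ 2) (K := K) (c := 0)
    hτb.le (hg τ b hτ hτb.le).1 (fun x hx => by linarith [(hg τ x hτ hx.1).2]) (by
      filter_upwards [hle] with r hr hrI
      have hneg : E (y τ) - E (y r) < 0 :=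
        (EReal.sub_neg (Or.inl (hlt r hrI).ne_top) (Or.inr (hlt r hrI).ne_bot)).2 (hlt r hrI)
      have := EReal.coe_lt_coe_iff.1 ((hr (hτ.trans hrI.1)).trans_lt hneg)
      linarith)
  rw [dist_self, zero_pow two_ne_zero, sub_zero, zero_mul] at hcmp
  have hd : dist (y b) (y τ) ^ 2 = 0 :=
    le_antisymm (nonpos_of_mul_nonpos_right hcmp (Real.exp_pos _)) (sq_nonneg _)
  rw [pow_eq_zero_iff two_ne_zero, dist_eq_zero] at hd
  exact (hlt b ⟨hτb, le_rfl⟩).ne (by rw [hd])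

theorem antitoneOn (h : IsEVISolution K E y) (hE : LowerSemicontinuous E)
    (hy : ContinuousOn y (Ioi 0)) : AntitoneOn (E ∘ y) (Ioi 0) := by
  intro a ha b _ hab
  by_contra! hlt
  set S := Icc a b ∩ y ⁻¹' {x | E x ≤ E (y a)}
  have hS : IsCompact S := isCompact_Icc.of_isClosed_subset
    ((hy.mono fun x hx => ha.trans_le hx.1).preimage_isClosed_of_isClosed isClosed_Icc
      (hE.isClosed_preimage (E (y a)))) inter_subset_left
  have haS : a ∈ S := ⟨⟨le_rfl, hab⟩, le_refl (E (y a))⟩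
  have hτS : sSup S ∈ S := hS.sSup_mem ⟨a, haS⟩
  have hτb : sSup S < b := hτS.1.2.lt_of_ne fun heq => hlt.not_ge (heq ▸ hτS.2)
  obtain ⟨v, hv, hvτ⟩ := h.exists_le_of_lt (ha.trans_le hτS.1.1) hτb
  have hvS : v ∈ S := ⟨⟨hτS.1.1.trans hv.1.le, hv.2⟩, hvτ.trans hτS.2⟩
  exact hv.1.not_ge (le_csSup hS.bddAbove hvS)

end IsEVISolution

theorem stmt4_general {X : Type*} [MetricSpace X]
    (K : ℝ) (E : X → EReal) (hE : LowerSemicontinuous E)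
    (y : ℝ → X) (hcont : ContinuousOn y (Set.Ici 0))
    (hAC : ∀ z : X, E z ≠ ⊤ → ∃ g : ℝ → ℝ,
      (∀ s t : ℝ, 0 < s → s ≤ t → IntervalIntegrable g MeasureTheory.volume s t ∧
        dist (y t) z ^ 2 - dist (y s) z ^ 2 = ∫ r in s..t, g r) ∧
      (∀ᵐ r ∂MeasureTheory.volume, 0 < r →
        ((1 / 2 * g r + K / 2 * dist (y r) z ^ 2 : ℝ) : EReal) ≤ E z - E (y r))) :
    ∀ z : X, E z ≠ ⊤ → ∀ s t : ℝ, 0 ≤ s → s ≤ t →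
      ((Real.exp (K * (t - s)) / 2 * dist (y t) z ^ 2
          - 1 / 2 * dist (y s) z ^ 2 : ℝ) : EReal)
        ≤ ((∫ r in (0:ℝ)..(t - s), Real.exp (K * r) : ℝ) : EReal) * (E z - E (y t)) := by
  intro z hz s t hs hst
  rcases hst.eq_or_lt with rfl | hst
  · simp
  have ht : 0 < t := hs.trans_lt hst
  obtain ⟨g, hg, hle⟩ := hAC z hz
  have hmono := IsEVISolution.antitoneOn hAC hE (hcont.mono Ioi_subset_Ici_self)
  have hbound : ∀ᵐ r, r ∈ Ioc 0 t →
      ((1 / 2 * g r + K / 2 * dist (y r) z ^ 2 : ℝ) : EReal) ≤ E z - E (y t) := by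
    filter_upwards [hle] with r hr hrI
    exact (hr hrI.1).trans (EReal.sub_le_sub le_rfl (hmono hrI.1 ht hrI.2))
  induction hB : E z - E (y t) using EReal.rec with
  | bot => exact absurd hB (ne_bot_of_ae_coe_le (by simp [ht]) hbound)
  | top =>
    have hI : 0 < ∫ r in (0:ℝ)..(t - s), Real.exp (K * r) :=
      intervalIntegral.intervalIntegral_pos_of_pos
        ((by fun_prop : Continuous fun r => Real.exp (K * r)).intervalIntegrable _ _)
        (fun _ => Real.exp_pos _) (sub_pos.2 hst)
    rw [EReal.coe_mul_top_of_pos hI]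
    exact le_top
  | coe β =>
    have hD₀ : ContinuousWithinAt (fun r => dist (y r) z ^ 2) (Ioi 0) 0 :=
      (((hcont 0 self_mem_Ici).mono Ioi_subset_Ici_self).dist continuousWithinAt_const).pow 2
    have := exp_mul_sub_le_of_ae_le_of_continuousWithinAt (K := K) (c := 2 * β) hD₀ hg (by
      filter_upwards [hbound] with r hr hrI
      have := EReal.coe_le_coe_iff.1 (hB ▸ hr hrI)
      linarith) hs hst
    rw [← EReal.coe_mul, EReal.coe_le_coe_iff]
    linarith

/-- Integral formulation of the `EVI_K` gradient-flow inequality: the a.e.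
differential inequality implies the integral inequality. -/
theorem stmt4 {X : Type*} [MetricSpace X]
    (K : ℝ) (E : X → EReal) (hE : LowerSemicontinuous E)
    (y : ℝ → X) (hcont : ContinuousOn y (Set.Ici 0))
    (hstart : Filter.Tendsto y (nhdsWithin 0 (Set.Ioi 0)) (nhds (y 0)))
    (hAC : ∀ z : X, E z ≠ ⊤ → ∃ g : ℝ → ℝ,
      (∀ s t : ℝ, 0 < s → s ≤ t → IntervalIntegrable g MeasureTheory.volume s t ∧
        dist (y t) z ^ 2 - dist (y s) z ^ 2 = ∫ r in s..t, g r) ∧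
      (∀ᵐ r ∂MeasureTheory.volume, 0 < r →
        ((1 / 2 * g r + K / 2 * dist (y r) z ^ 2 : ℝ) : EReal) ≤ E z - E (y r))) :
    ∀ z : X, E z ≠ ⊤ → ∀ s t : ℝ, 0 ≤ s → s ≤ t →
      ((Real.exp (K * (t - s)) / 2 * dist (y t) z ^ 2
          - 1 / 2 * dist (y s) z ^ 2 : ℝ) : EReal)
        ≤ ((∫ r in (0:ℝ)..(t - s), Real.exp (K * r) : ℝ) : EReal) * (E z - E (y t)) :=
  stmt4_general K E hE y hcont hAC
end

section
/- Let (X,d) be a metric space, K ∈ ℝ, E: X → ℝ ∪ {+∞} lower semi-continuous, and μ a Borel probability measure on X with finite variance. Suppose ȳ is a barycenter of μ (i.e. ∫ d²(ȳ,z) dμ(z) = Var(μ) := inf_x ∫ d²(x,z)dμ(z)), and suppose there exists an EVI_K gradient flow (y_t)_{t>0} of E starting from ȳ (in particular satisfying the integral inequality (e^{Kt}/2)d²(y_t,z) − (1/2)d²(ȳ,z) ≤ I_K(t)(E(z) − E(y_t)) for all z ∈ D(E), with y_t → ȳ as t → 0). Then Jensen's inequality holds: E(ȳ) ≤ ∫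 E(z) dμ(z) − (K/2)·Var(μ). -/
/-!
Fix a real `c < E ȳ`. Lower semicontinuity and `y_t → ȳ` give a time `t > 0` with
`c < E (y_t)`. Integrating the EVI inequality against `μ` and using that `ȳ` minimises
`x ↦ ∫ d²(x, ·) dμ` gives `(e^{Kt} - 1)/2 · Var μ ≤ I_K(t) (∫ E dμ - c)`; since
`e^{Kt} - 1 = K I_K(t)`, this is `c ≤ ∫ E dμ - (K/2) Var μ`.

The EVI inequality at a single such time also bounds `E` below by `c - d²(ȳ, ·)/(2 I_K(t))`,
so the negative part of `E` is integrable and `∫ E dμ` is either `+∞` or the Bochner integral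
of `E`.
-/

open MeasureTheory
open scoped ENNReal

/-- The positive part of an extended real, as an element of `ℝ≥0∞`. -/
noncomputable def ERealPos (a : EReal) : ℝ≥0∞ :=
  if a = ⊤ then ⊤ else ENNReal.ofReal a.toReal

/-- Integral of an `EReal`-valued function (with values in `ℝ ∪ {+∞}`):
positive part minus negative part, computed with lower integrals. -/
noncomputable def ERealIntegral {X : Type*} [MeasurableSpace X]
    (μ : MeasureTheory.Measure X) (E : X → EReal) : EReal :=
  ((∫⁻ z, ERealPos (E z) ∂μ : ℝ≥0∞) : EReal) - ((∫⁻ z, ERealPos (-(E z)) ∂μ : ℝ≥0∞) : EReal)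

open Filter Topology

section ERealIntegral

variable {X : Type*} [MeasurableSpace X] {μ : Measure X} {E : X → EReal}

-- `ERealPos` is `EReal.toENNReal` by definition.
lemma ERealIntegral_eq :
    ERealIntegral μ E =
      ((∫⁻ z, (E z).toENNReal ∂μ : ℝ≥0∞) : EReal) -
        ((∫⁻ z, (-E z).toENNReal ∂μ : ℝ≥0∞) : EReal) :=
  rfl

lemma ERealIntegral_eq_top (hP : ∫⁻ z, (E z).toENNReal ∂μ = ⊤)
    (hN : ∫⁻ z, (-E z).toENNReal ∂μ ≠ ⊤) : ERealIntegral μ E = ⊤ := by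
  rw [ERealIntegral_eq, hP, ← EReal.coe_ennreal_toReal hN, EReal.coe_ennreal_top,
    EReal.top_sub_coe]

lemma EReal.enorm_toReal_le (a : EReal) : ‖a.toReal‖ₑ ≤ a.toENNReal + (-a).toENNReal := by
  induction a with
  | bot => simp
  | top => simp
  | coe x =>
    rw [Real.enorm_eq_ofReal_abs, ← EReal.coe_neg, EReal.real_coe_toENNReal,
      EReal.real_coe_toENNReal, EReal.toReal_coe]
    rcases abs_cases x with ⟨h, -⟩ | ⟨h, -⟩ <;> rw [h]
    · exact le_self_add
    · exact le_add_self

lemma ae_ne_top_of_lintegral_toENNReal_ne_top (hE : Measurable E)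
    (hP : ∫⁻ z, (E z).toENNReal ∂μ ≠ ⊤) : ∀ᵐ z ∂μ, E z ≠ ⊤ := by
  filter_upwards [ae_lt_top hE.ereal_toENNReal hP] with z hz
  exact EReal.toENNReal_ne_top_iff.1 hz.ne

lemma integrable_ereal_toReal (hE : Measurable E) (hP : ∫⁻ z, (E z).toENNReal ∂μ ≠ ⊤)
    (hN : ∫⁻ z, (-E z).toENNReal ∂μ ≠ ⊤) : Integrable (fun z => (E z).toReal) μ := by
  refine ⟨hE.ereal_toReal.aestronglyMeasurable, ?_⟩
  calc ∫⁻ z, ‖(E z).toReal‖ₑ ∂μ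
      ≤ ∫⁻ z, ((E z).toENNReal + (-E z).toENNReal) ∂μ :=
        lintegral_mono fun z => EReal.enorm_toReal_le (E z)
    _ = ∫⁻ z, (E z).toENNReal ∂μ + ∫⁻ z, (-E z).toENNReal ∂μ :=
        lintegral_add_left hE.ereal_toENNReal _
    _ < ⊤ := ENNReal.add_lt_top.2 ⟨hP.lt_top, hN.lt_top⟩

lemma ERealIntegral_eq_integral (hE : Measurable E) (hP : ∫⁻ z, (E z).toENNReal ∂μ ≠ ⊤)
    (hN : ∫⁻ z, (-E z).toENNReal ∂μ ≠ ⊤) :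
    ERealIntegral μ E = ((∫ z, (E z).toReal ∂μ : ℝ) : EReal) := by
  have hpos : ∀ᵐ z ∂μ, ENNReal.ofReal (E z).toReal = (E z).toENNReal := by
    filter_upwards [ae_ne_top_of_lintegral_toENNReal_ne_top hE hP] with z hz
    rw [EReal.toENNReal_of_ne_top hz]
  have hneg : ∀ᵐ z ∂μ, ENNReal.ofReal (-(E z).toReal) = (-E z).toENNReal := by
    filter_upwards [ae_ne_top_of_lintegral_toENNReal_ne_top hE.neg hN] with z hz
    rw [EReal.toENNReal_of_ne_top (x := -E z) hz, EReal.toReal_neg_eq]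
  rw [integral_eq_lintegral_pos_part_sub_lintegral_neg_part (integrable_ereal_toReal hE hP hN),
    lintegral_congr_ae hpos, lintegral_congr_ae hneg, EReal.coe_sub,
    EReal.coe_ennreal_toReal hP, EReal.coe_ennreal_toReal hN, ERealIntegral_eq]

lemma lintegral_toENNReal_neg_ne_top_of_le {g : X → ℝ} (hg : Integrable g μ)
    (hle : ∀ z, (g z : EReal) ≤ E z) : ∫⁻ z, (-E z).toENNReal ∂μ ≠ ⊤ := by
  refine ne_top_of_le_ne_top hg.neg.lintegral_lt_top.ne (lintegral_mono fun z => ?_)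
  change (-E z).toENNReal ≤ ENNReal.ofReal (-g z)
  rw [← EReal.real_coe_toENNReal, EReal.coe_neg]
  exact EReal.toENNReal_le_toENNReal (EReal.neg_le_neg_iff.2 (hle z))

end ERealIntegral

section SecondMoment

lemma edist_sq_eq_ofReal {X : Type*} [PseudoMetricSpace X] (x z : X) :
    edist x z ^ 2 = ENNReal.ofReal (dist x z ^ 2) := by
  rw [edist_dist, ← ENNReal.ofReal_pow dist_nonneg]

lemma lintegral_edist_sq_eq_ofReal_integral {X : Type*} [PseudoMetricSpace X] [MeasurableSpace X]
    {μ : Measure X} {x : X} (h : Integrable (fun z => dist x z ^ 2) μ) :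
    ∫⁻ z, edist x z ^ 2 ∂μ = ENNReal.ofReal (∫ z, dist x z ^ 2 ∂μ) := by
  simp_rw [edist_sq_eq_ofReal]
  exact (ofReal_integral_eq_lintegral_ofReal h (Eventually.of_forall fun z => by positivity)).symm

variable {X : Type*} [PseudoMetricSpace X] [MeasurableSpace X] [OpensMeasurableSpace X]
  {μ : Measure X}

lemma integrable_dist_sq_of_lintegral_ne_top {x : X} (h : ∫⁻ z, edist x z ^ 2 ∂μ ≠ ⊤) :
    Integrable (fun z => dist x z ^ 2) μ := by
  simp_rw [edist_sq_eq_ofReal] at h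
  exact (lintegral_ofReal_ne_top_iff_integrable (by fun_prop)
    (Eventually.of_forall fun z => by positivity)).1 h

lemma integrable_dist_sq_of_integrable_dist_sq [IsFiniteMeasure μ] {x₀ : X}
    (h : Integrable (fun z => dist x₀ z ^ 2) μ) (x : X) :
    Integrable (fun z => dist x z ^ 2) μ := by
  have h₀ : MemLp (fun z => dist x₀ z) 2 μ := (memLp_two_iff_integrable_sq (by fun_prop)).2 h
  refine (memLp_two_iff_integrable_sq (by fun_prop)).1
    (((memLp_const (dist x x₀)).add h₀).of_le (by fun_prop) (Eventually.of_forall fun z => ?_))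
  rw [Pi.add_apply, Real.norm_of_nonneg dist_nonneg, Real.norm_of_nonneg (by positivity)]
  exact dist_triangle x x₀ z

lemma integral_dist_sq_le_of_lintegral_eq_iInf [IsFiniteMeasure μ] {x₀ : X}
    (hfin : ∫⁻ z, edist x₀ z ^ 2 ∂μ ≠ ⊤)
    (hmin : ∫⁻ z, edist x₀ z ^ 2 ∂μ = ⨅ x : X, ∫⁻ z, edist x z ^ 2 ∂μ) (x : X) :
    ∫ z, dist x₀ z ^ 2 ∂μ ≤ ∫ z, dist x z ^ 2 ∂μ := by
  have h₀ := integrable_dist_sq_of_lintegral_ne_top hfin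
  have hx := integrable_dist_sq_of_integrable_dist_sq h₀ x
  rw [← ENNReal.ofReal_le_ofReal_iff (integral_nonneg fun z => by positivity),
    ← lintegral_edist_sq_eq_ofReal_integral h₀, ← lintegral_edist_sq_eq_ofReal_integral hx,
    hmin]
  exact iInf_le _ x

end SecondMoment

lemma EReal.coe_div_add_le_of_le_mul_sub {r I c : ℝ} {a b : EReal} (hI : 0 < I)
    (hc : (c : EReal) < b) (h : (r : EReal) ≤ I * (a - b)) :
    ((r / I + c : ℝ) : EReal) ≤ a := by
  have hbot : ((I : EReal) * ⊥) = ⊥ := EReal.mul_bot_of_pos (EReal.coe_pos.2 hI)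
  induction a with
  | bot => simp [EReal.bot_sub, hbot] at h
  | top => exact le_top
  | coe x =>
    induction b with
    | bot => exact absurd hc not_lt_bot
    | top => simp [EReal.sub_top, hbot] at h
    | coe y =>
      norm_cast at h hc ⊢
      rw [div_add' _ _ _ hI.ne', div_le_iff₀ hI]
      nlinarith

lemma LowerSemicontinuous.exists_pos_lt_comp {α β : Type*} [TopologicalSpace α] [Preorder β]
    {f : α → β} (hf : LowerSemicontinuous f) {g : ℝ → α} {a : α}
    (hg : Tendsto g (𝓝[>] 0) (𝓝 a)) {c : β} (hc : c < f a) : ∃ t > 0, c < f (g t) :=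
  ((hg.eventually (hf a c hc)).and self_mem_nhdsWithin).exists.imp fun _ h => ⟨h.2, h.1⟩

-- The paper's `I_K(t)`.
noncomputable def expIntegral (K t : ℝ) : ℝ := ∫ r in (0:ℝ)..t, Real.exp (K * r)

lemma expIntegral_pos (K : ℝ) {t : ℝ} (ht : 0 < t) : 0 < expIntegral K t :=
  intervalIntegral.intervalIntegral_pos_of_pos_on
    ((by fun_prop : Continuous fun r => Real.exp (K * r)).intervalIntegrable _ _)
    (fun _ _ => Real.exp_pos _) ht

lemma exp_mul_sub_one_eq_mul_expIntegral (K t : ℝ) :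
    Real.exp (K * t) - 1 = K * expIntegral K t := by
  rcases eq_or_ne K 0 with rfl | hK
  · simp
  · rw [expIntegral, intervalIntegral.integral_comp_mul_left (f := Real.exp) hK, integral_exp,
      mul_zero, Real.exp_zero, smul_eq_mul, mul_inv_cancel_left₀ hK]

section EVI

variable {X : Type*} [PseudoMetricSpace X]

def EVIIntegralIneq (K : ℝ) (E : X → EReal) (ybar : X) (y : ℝ → X) : Prop :=
  ∀ z : X, E z ≠ ⊤ → ∀ t : ℝ, 0 < t →
    ((Real.exp (K * t) / 2 * dist (y t) z ^ 2 - 1 / 2 * dist ybar z ^ 2 : ℝ) : EReal)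
      ≤ (expIntegral K t : EReal) * (E z - E (y t))

namespace EVIIntegralIneq

variable {K : ℝ} {E : X → EReal} {ybar : X} {y : ℝ → X} {t c : ℝ}

lemma le_mul_toReal_sub (h : EVIIntegralIneq K E ybar y) {z : X} (hz : E z ≠ ⊤) (ht : 0 < t)
    (hc : (c : EReal) < E (y t)) :
    Real.exp (K * t) / 2 * dist (y t) z ^ 2 - 1 / 2 * dist ybar z ^ 2
      ≤ expIntegral K t * ((E z).toReal - c) := by
  have hI := expIntegral_pos K ht
  have hle := EReal.toReal_le_toReal (EReal.coe_div_add_le_of_le_mul_sub hI hc (h z hz t ht))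
    (EReal.coe_ne_bot _) hz
  rw [EReal.toReal_coe, ← le_sub_iff_add_le, div_le_iff₀ hI] at hle
  linarith

lemma coe_sub_div_le (h : EVIIntegralIneq K E ybar y) (ht : 0 < t) (hc : (c : EReal) < E (y t))
    (z : X) : ((c - dist ybar z ^ 2 / (2 * expIntegral K t) : ℝ) : EReal) ≤ E z := by
  by_cases hz : E z = ⊤
  · simp [hz]
  have hI := expIntegral_pos K ht
  refine le_trans (EReal.coe_le_coe_iff.2 ?_)
    (EReal.coe_div_add_le_of_le_mul_sub hI hc (h z hz t ht))
  have hsq : 0 ≤ Real.exp (K * t) / 2 * dist (y t) z ^ 2 := by positivity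
  calc c - dist ybar z ^ 2 / (2 * expIntegral K t)
      = -(1 / 2 * dist ybar z ^ 2) / expIntegral K t + c := by ring
    _ ≤ _ := by gcongr; linarith

variable [MeasurableSpace X] [OpensMeasurableSpace X] {μ : Measure X} [IsProbabilityMeasure μ]

lemma le_integral_sub (h : EVIIntegralIneq K E ybar y)
    (hbar : Integrable (fun z => dist ybar z ^ 2) μ)
    (hmin : ∀ x, ∫ z, dist ybar z ^ 2 ∂μ ≤ ∫ z, dist x z ^ 2 ∂μ)
    (hf : Integrable (fun z => (E z).toReal) μ) (hfin : ∀ᵐ z ∂μ, E z ≠ ⊤)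
    (ht : 0 < t) (hc : (c : EReal) < E (y t)) :
    c ≤ ∫ z, (E z).toReal ∂μ - K / 2 * ∫ z, dist ybar z ^ 2 ∂μ := by
  set I := expIntegral K t
  set v := ∫ z, dist ybar z ^ 2 ∂μ
  set F := ∫ z, (E z).toReal ∂μ
  have hI : 0 < I := expIntegral_pos K ht
  have hyt := integrable_dist_sq_of_integrable_dist_sq hbar (y t)
  have hint : Real.exp (K * t) / 2 * ∫ z, dist (y t) z ^ 2 ∂μ - 1 / 2 * v ≤ I * (F - c) := by
    have hmono : ∫ z, (Real.exp (K * t) / 2 * dist (y t) z ^ 2 - 1 / 2 * dist ybar z ^ 2) ∂μ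
        ≤ ∫ z, I * ((E z).toReal - c) ∂μ :=
      integral_mono_ae ((hyt.const_mul _).sub (hbar.const_mul _))
      ((hf.sub (integrable_const c)).const_mul I)
      (by filter_upwards [hfin] with z hz using h.le_mul_toReal_sub hz ht hc)
    rwa [integral_sub (hyt.const_mul _) (hbar.const_mul _), integral_const_mul,
      integral_const_mul, integral_const_mul, integral_sub hf (integrable_const c),
      integral_const, probReal_univ, one_smul] at hmono
  have hvar : Real.exp (K * t) / 2 * v - 1 / 2 * v
      ≤ Real.exp (K * t) / 2 * ∫ z, dist (y t) z ^ 2 ∂μ - 1 / 2 * v := by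
    gcongr
    exact hmin (y t)
  have hK : Real.exp (K * t) / 2 * v - 1 / 2 * v = I * (K / 2 * v) := by
    linear_combination (v / 2) * exp_mul_sub_one_eq_mul_expIntegral K t
  have hkey := le_of_mul_le_mul_left (hK ▸ hvar.trans hint) hI
  linarith

end EVIIntegralIneq

end EVI

/-- Jensen's inequality for a barycenter, from the existence of an `EVI_K`
gradient flow (in its integral formulation) starting at the barycenter. -/
theorem stmt5 {X : Type*} [MetricSpace X] [MeasurableSpace X] [BorelSpace X]
    (K : ℝ) (E : X → EReal) (hE : LowerSemicontinuous E)
    (μ : Measure X) [IsProbabilityMeasure μ]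
    (hVar : (⨅ x : X, ∫⁻ z, edist x z ^ 2 ∂μ) < ⊤)
    (ybar : X) (hbar : ∫⁻ z, edist ybar z ^ 2 ∂μ = ⨅ x : X, ∫⁻ z, edist x z ^ 2 ∂μ)
    (y : ℝ → X) (hstart : Filter.Tendsto y (nhdsWithin 0 (Set.Ioi 0)) (nhds ybar))
    (hEVI : ∀ z : X, E z ≠ ⊤ → ∀ t : ℝ, 0 < t →
      ((Real.exp (K * t) / 2 * dist (y t) z ^ 2 - 1 / 2 * dist ybar z ^ 2 : ℝ) : EReal)
        ≤ ((∫ r in (0:ℝ)..t, Real.exp (K * r) : ℝ) : EReal) * (E z - E (y t))) :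
    E ybar ≤ ERealIntegral μ E -
      ((K / 2 * (⨅ x : X, ∫⁻ z, edist x z ^ 2 ∂μ).toReal : ℝ) : EReal) := by
  have hflow : EVIIntegralIneq K E ybar y := hEVI
  by_cases hbot : E ybar = ⊥
  · simp [hbot]
  have hfin : ∫⁻ z, edist ybar z ^ 2 ∂μ ≠ ⊤ := hbar ▸ hVar.ne
  have hbarInt := integrable_dist_sq_of_lintegral_ne_top hfin
  have hV : (⨅ x : X, ∫⁻ z, edist x z ^ 2 ∂μ).toReal = ∫ z, dist ybar z ^ 2 ∂μ := by
    rw [← hbar, lintegral_edist_sq_eq_ofReal_integral hbarInt,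
      ENNReal.toReal_ofReal (integral_nonneg fun z => by positivity)]
  obtain ⟨c₀, -, hc₀⟩ := EReal.exists_between_coe_real (bot_lt_iff_ne_bot.2 hbot)
  obtain ⟨t₀, ht₀, hct₀⟩ := hE.exists_pos_lt_comp hstart hc₀
  have hN : ∫⁻ z, (-E z).toENNReal ∂μ ≠ ⊤ := lintegral_toENNReal_neg_ne_top_of_le
    ((integrable_const c₀).sub (hbarInt.div_const _)) (hflow.coe_sub_div_le ht₀ hct₀)
  by_cases hP : ∫⁻ z, (E z).toENNReal ∂μ = ⊤
  · rw [ERealIntegral_eq_top hP hN, EReal.top_sub_coe]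
    exact le_top
  rw [ERealIntegral_eq_integral hE.measurable hP hN, hV, ← EReal.coe_sub,
    ← EReal.ge_of_forall_gt_iff_ge]
  intro c hc
  obtain ⟨t, ht, hct⟩ := hE.exists_pos_lt_comp hstart hc
  exact EReal.coe_le_coe_iff.2 (hflow.le_integral_sub hbarInt
    (integral_dist_sq_le_of_lintegral_eq_iInf hfin hbar)
    (integrable_ereal_toReal hE.measurable hP hN)
    (ae_ne_top_of_lintegral_toENNReal_ne_top hE.measurable hP) ht hct)
end

section
/- Let (X,d,m) be a metric measure space satisfying BCD(1,∞): for any finitely supported probability measure Ω on P₂(X) with barycenter μ̄, Ent_m(μ̄) ≤ ∫Ent_m dΩ − (1/2)Var(Ω). Let f₁,…,f_k be measurable functions with e^{fᵢ}/∫e^{fᵢ}dm ∈ P₂(X,d) and Σᵢ fᵢ(xᵢ) ≤ (1/2)·inf_{x∈X} Σᵢ d²(x,xᵢ) for all x₁,…,x_k ∈ X. Then ∏ᵢ ∫_X e^{fᵢ} dm ≤ 1 (functional Blaschke–Santaló type inequality). -/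
open MeasureTheory
open scoped ENNReal
open Classical

/-- Squared 2-Wasserstein distance (as an extended real number). -/
noncomputable def W2sq {X : Type*} [PseudoEMetricSpace X] [MeasurableSpace X]
    (μ ν : Measure X) : ℝ≥0∞ :=
  ⨅ π ∈ {π : Measure (X × X) | π.map Prod.fst = μ ∧ π.map Prod.snd = ν},
    ∫⁻ p, edist p.1 p.2 ^ 2 ∂π

/-- Relative entropy `Ent_m(ν) = ∫ ρ log ρ dm` for `ν = ρ·m`, `+∞` otherwise. -/
noncomputable def Ent {X : Type*} [MeasurableSpace X] (m ν : Measure X) : EReal :=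
  if ν ≪ m ∧ Integrable (fun x => Real.log (ν.rnDeriv m x).toReal) ν then
    ((∫ x, Real.log (ν.rnDeriv m x).toReal ∂ν : ℝ) : EReal)
  else ⊤


/-!
The normalised measures `νᵢ = e^{fᵢ} m / ∫ e^{fᵢ} dm` are exponential tilts of `m`, so
`Ent_m(νᵢ) = ∫ fᵢ dνᵢ - log ∫ e^{fᵢ} dm`. Applying `BCD(1,∞)` to the `νᵢ` with uniform weights
and using `Ent_m(ν̄) ≥ 0` (Gibbs' inequality; `m` is a probability measure) gives
`½ ∑ W₂²(νᵢ, ν̄) ≤ ∑ ∫ fᵢ dνᵢ - ∑ log ∫ e^{fᵢ} dm`.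
Conversely, the `c`-transforms `gᵢ y = sup_x (fᵢ x - d²(x, y)/2)` satisfy `∑ gᵢ ≤ 0` by the
hypothesis on the `fᵢ`, and integrating `fᵢ x ≤ gᵢ y + d²(x, y)/2` against couplings of `νᵢ`
and `ν̄` gives `∑ ∫ fᵢ dνᵢ ≤ ½ ∑ W₂²(νᵢ, ν̄)`. Hence `∑ log ∫ e^{fᵢ} dm ≤ 0`.
-/

section Wasserstein

lemma ENNReal.add_sq_le_two_mul (a b : ℝ≥0∞) : (a + b) ^ 2 ≤ 2 * (a ^ 2 + b ^ 2) := by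
  rcases eq_or_ne a ⊤ with rfl | ha
  · simp
  rcases eq_or_ne b ⊤ with rfl | hb
  · simp
  lift a to NNReal using ha
  lift b to NNReal using hb
  exact_mod_cast add_sq_le (a := a) (b := b)

lemma edist_sq_le_two_mul {X : Type*} [PseudoEMetricSpace X] (x y z : X) :
    edist x z ^ 2 ≤ 2 * (edist x y ^ 2 + edist y z ^ 2) :=
  (pow_le_pow_left₀ bot_le (edist_triangle x y z) 2).trans (ENNReal.add_sq_le_two_mul _ _)

variable {X : Type*} [PseudoMetricSpace X] [MeasurableSpace X]

lemma W2sq_le_lintegral {μ ν : Measure X} {π : Measure (X × X)} (h₁ : π.map Prod.fst = μ)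
    (h₂ : π.map Prod.snd = ν) : W2sq μ ν ≤ ∫⁻ p, edist p.1 p.2 ^ 2 ∂π :=
  iInf₂_le π ⟨h₁, h₂⟩

lemma W2sq_dirac_le (μ : Measure X) [IsProbabilityMeasure μ] (a : X) :
    W2sq μ (Measure.dirac a) ≤ ∫⁻ z, edist a z ^ 2 ∂μ := by
  have hT : Measurable fun x : X => (x, a) := measurable_id.prodMk measurable_const
  calc W2sq μ (Measure.dirac a) ≤ ∫⁻ p, edist p.1 p.2 ^ 2 ∂(μ.map fun x => (x, a)) := by
        refine W2sq_le_lintegral ?_ ?_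
        · rw [Measure.map_map measurable_fst hT]; exact Measure.map_id
        · rw [Measure.map_map measurable_snd hT]
          simp [Function.comp_def, Measure.map_const]
    _ ≤ ∫⁻ z, edist z a ^ 2 ∂μ := lintegral_map_le _ _
    _ = ∫⁻ z, edist a z ^ 2 ∂μ := by simp_rw [edist_comm]

lemma lintegral_edist_sq_lt_top_of_lt_top {μ : Measure X} [IsFiniteMeasure μ] {a : X}
    (h : ∫⁻ z, edist a z ^ 2 ∂μ < ⊤) (b : X) : ∫⁻ z, edist b z ^ 2 ∂μ < ⊤ := by
  calc ∫⁻ z, edist b z ^ 2 ∂μ ≤ ∫⁻ z, 2 * (edist b a ^ 2 + edist a z ^ 2) ∂μ :=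
        lintegral_mono fun z => edist_sq_le_two_mul b a z
    _ = 2 * (edist b a ^ 2 * μ Set.univ + ∫⁻ z, edist a z ^ 2 ∂μ) := by
        rw [lintegral_const_mul' _ _ (by norm_num), lintegral_add_left measurable_const,
          lintegral_const]
    _ < ⊤ := by
        have := edist_lt_top b a
        have := measure_lt_top μ Set.univ
        finiteness

lemma ofReal_two_mul_integral_sub_integral_le_W2sq {μ ν : Measure X} {φ ψ : X → ℝ}
    (hφ : Integrable φ μ) (hψ : Integrable ψ ν) (hφψ : ∀ x y, φ x ≤ ψ y + dist x y ^ 2 / 2) :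
    ENNReal.ofReal (2 * (∫ x, φ x ∂μ - ∫ y, ψ y ∂ν)) ≤ W2sq μ ν := by
  refine le_iInf₂ fun π ⟨h₁, h₂⟩ => ?_
  subst h₁ h₂
  have hφ₁ : Integrable (fun p : X × X => φ p.1) π := hφ.comp_measurable measurable_fst
  have hψ₂ : Integrable (fun p : X × X => ψ p.2) π := hψ.comp_measurable measurable_snd
  set c : X × X → ℝ := fun p => 2 * (φ p.1 - ψ p.2)
  have hc : Integrable c π := (hφ₁.sub hψ₂).const_mul 2
  have hint : ∫ x, φ x ∂π.map Prod.fst - ∫ y, ψ y ∂π.map Prod.snd = ∫ p, φ p.1 - ψ p.2 ∂π := by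
    rw [integral_map measurable_fst.aemeasurable hφ.1,
      integral_map measurable_snd.aemeasurable hψ.1, integral_sub hφ₁ hψ₂]
  calc ENNReal.ofReal (2 * (∫ x, φ x ∂π.map Prod.fst - ∫ y, ψ y ∂π.map Prod.snd))
      = ENNReal.ofReal (∫ p, c p ∂π) := by rw [hint, integral_const_mul]
    _ ≤ ENNReal.ofReal (∫⁻ p, ENNReal.ofReal (c p) ∂π).toReal := by
        gcongr
        rw [integral_eq_lintegral_pos_part_sub_lintegral_neg_part hc]
        exact sub_le_self _ ENNReal.toReal_nonneg
    _ ≤ ∫⁻ p, ENNReal.ofReal (c p) ∂π := ENNReal.ofReal_toReal_le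
    _ ≤ ∫⁻ p, edist p.1 p.2 ^ 2 ∂π := lintegral_mono fun p => by
        rw [edist_dist, ← ENNReal.ofReal_pow dist_nonneg]
        exact ENNReal.ofReal_le_ofReal (by linarith [hφψ p.1 p.2])

variable [OpensMeasurableSpace X]

lemma lintegral_edist_sq_lt_top_of_W2sq_lt_top {μ ν : Measure X} {a : X}
    (hμ : ∫⁻ z, edist a z ^ 2 ∂μ < ⊤) (hW : W2sq μ ν < ⊤) :
    ∫⁻ z, edist a z ^ 2 ∂ν < ⊤ := by
  obtain ⟨π, ⟨h₁, h₂⟩, hπ⟩ : ∃ π ∈ {π : Measure (X × X) | π.map Prod.fst = μ ∧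
      π.map Prod.snd = ν}, ∫⁻ p, edist p.1 p.2 ^ 2 ∂π < ⊤ := by
    simpa [W2sq, iInf_lt_iff] using hW
  have hmeas : Measurable fun x : X => edist a x ^ 2 := by fun_prop
  calc ∫⁻ z, edist a z ^ 2 ∂ν = ∫⁻ p, edist a p.2 ^ 2 ∂π := by
        rw [← h₂, lintegral_map hmeas measurable_snd]
    _ ≤ ∫⁻ p, 2 * (edist a p.1 ^ 2 + edist p.1 p.2 ^ 2) ∂π :=
        lintegral_mono fun p => edist_sq_le_two_mul a p.1 p.2
    _ = 2 * (∫⁻ z, edist a z ^ 2 ∂μ + ∫⁻ p, edist p.1 p.2 ^ 2 ∂π) := by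
        rw [lintegral_const_mul' _ _ (by norm_num),
          lintegral_add_left (by fun_prop : Measurable fun p : X × X => edist a p.1 ^ 2), ← h₁,
          lintegral_map hmeas measurable_fst]
    _ < ⊤ := by finiteness

lemma integrable_dist_sq {μ : Measure X} {a : X} (h : ∫⁻ z, edist a z ^ 2 ∂μ < ⊤) :
    Integrable (fun z => dist a z ^ 2) μ := by
  refine (integrable_toReal_of_lintegral_ne_top (by fun_prop) h.ne).congr
    (ae_of_all _ fun z => ?_)
  simp [edist_dist, ENNReal.toReal_ofReal dist_nonneg]

end Wasserstein

section CTransform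
variable {X : Type*} [PseudoMetricSpace X]

-- The `c`-transform for the cost `d²/2`; `⨆` is junk (`0`) where the family is unbounded above.
noncomputable def cTransform (φ : X → ℝ) (y : X) : ℝ := ⨆ x, φ x - dist x y ^ 2 / 2

variable {ι : Type*} [Fintype ι] {f : ι → X → ℝ}

lemma le_sub_sum_of_forall_sum_le
    (hdual : ∀ p : ι → X, ∀ y : X, ∑ i, f i (p i) ≤ 1 / 2 * ∑ i, dist y (p i) ^ 2)
    (i : ι) (x y : X) : f i x - dist x y ^ 2 / 2 ≤ f i y - ∑ j, f j y := by
  have h := hdual (Function.update (fun _ => y) i x) y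
  simp only [Function.apply_update (fun j p => f j p),
    Function.apply_update (fun _ p => dist y p ^ 2),
    Finset.sum_update_of_mem (Finset.mem_univ i), Finset.sdiff_singleton_eq_erase,
    Finset.sum_erase_eq_sub (Finset.mem_univ i), dist_self, dist_comm y x] at h
  norm_num at h
  linarith

lemma bddAbove_cTransform
    (hdual : ∀ p : ι → X, ∀ y : X, ∑ i, f i (p i) ≤ 1 / 2 * ∑ i, dist y (p i) ^ 2) (i : ι) (y : X) :
    BddAbove (Set.range fun x => f i x - dist x y ^ 2 / 2) :=
  ⟨_, Set.forall_mem_range.2 fun x => le_sub_sum_of_forall_sum_le hdual i x y⟩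

lemma sub_le_cTransform {φ : X → ℝ} {y : X}
    (hφ : BddAbove (Set.range fun x => φ x - dist x y ^ 2 / 2)) (x : X) :
    φ x - dist x y ^ 2 / 2 ≤ cTransform φ y :=
  le_ciSup hφ x

lemma sum_cTransform_nonpos [Nonempty X]
    (hdual : ∀ p : ι → X, ∀ y : X, ∑ i, f i (p i) ≤ 1 / 2 * ∑ i, dist y (p i) ^ 2) (y : X) :
    ∑ i, cTransform (f i) y ≤ 0 := by
  refine le_of_forall_pos_le_add fun ε hε => ?_
  set δ := ε / (Fintype.card ι + 1)
  have hδ : 0 < δ := by positivity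
  choose p hp using fun i =>
    exists_lt_of_lt_ciSup (sub_lt_self (cTransform (f i) y) hδ)
  have hcard : Fintype.card ι * δ ≤ ε := by
    rw [mul_div_assoc', div_le_iff₀ (by positivity)]
    nlinarith
  calc ∑ i, cTransform (f i) y
      ≤ ∑ i, (f i (p i) - dist (p i) y ^ 2 / 2 + δ) := Finset.sum_le_sum fun i _ => by
        linarith [hp i]
    _ = ∑ i, f i (p i) - 1 / 2 * ∑ i, dist y (p i) ^ 2 + Fintype.card ι * δ := by
        simp only [Finset.sum_add_distrib, Finset.sum_sub_distrib, Finset.mul_sum, dist_comm,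
          Finset.sum_const, Finset.card_univ, nsmul_eq_mul]
        ring_nf
    _ ≤ 0 + ε := by linarith [hdual p y]

variable [MeasurableSpace X] [OpensMeasurableSpace X]

lemma measurable_cTransform {φ : X → ℝ}
    (hφ : ∀ y, BddAbove (Set.range fun x => φ x - dist x y ^ 2 / 2)) :
    Measurable (cTransform φ) :=
  (lowerSemicontinuous_ciSup hφ fun x => (by fun_prop : Continuous fun y =>
    φ x - dist x y ^ 2 / 2).lowerSemicontinuous).measurable

lemma integrable_cTransform
    (hdual : ∀ p : ι → X, ∀ y : X, ∑ i, f i (p i) ≤ 1 / 2 * ∑ i, dist y (p i) ^ 2)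
    {ν : Measure X} [IsFiniteMeasure ν] {a : X} (hν : ∫⁻ z, edist a z ^ 2 ∂ν < ⊤) (i : ι) :
    Integrable (cTransform (f i)) ν := by
  have : Nonempty X := ⟨a⟩
  set B : ι → X → ℝ := fun j y => |f j a| + dist a y ^ 2 / 2
  have hB : ∀ j y, 0 ≤ B j y := fun j y => by positivity
  have hlow : ∀ j y, -B j y ≤ cTransform (f j) y := fun j y => by
    have := sub_le_cTransform (bddAbove_cTransform hdual j y) a
    simp only [B]
    linarith [neg_abs_le (f j a)]
  refine Integrable.mono' (g := fun y => ∑ j, B j y)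
    (integrable_finsetSum _ fun j _ =>
      (integrable_const _).add ((integrable_dist_sq hν).div_const 2))
    (measurable_cTransform (bddAbove_cTransform hdual i)).aestronglyMeasurable
    (ae_of_all _ fun y => ?_)
  -- `∑ gⱼ ≤ 0` turns the lower bounds of the other `gⱼ` into an upper bound for `gᵢ`.
  have hsum := Finset.add_sum_erase Finset.univ (fun j => cTransform (f j) y) (Finset.mem_univ i)
  have hup : cTransform (f i) y ≤ ∑ j ∈ Finset.univ.erase i, B j y := by
    have := Finset.sum_le_sum fun j (_ : j ∈ Finset.univ.erase i) => hlow j y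
    rw [Finset.sum_neg_distrib] at this
    linarith [sum_cTransform_nonpos hdual y]
  rw [Real.norm_eq_abs, abs_le]
  constructor
  · linarith [hlow i y, Finset.single_le_sum (fun j _ => hB j y) (Finset.mem_univ i)]
  · linarith [Finset.sum_le_sum_of_subset_of_nonneg (Finset.erase_subset i Finset.univ)
      fun j _ _ => hB j y]

lemma sum_integral_le_half_sum_W2sq
    (hdual : ∀ p : ι → X, ∀ y : X, ∑ i, f i (p i) ≤ 1 / 2 * ∑ i, dist y (p i) ^ 2)
    {ν : ι → Measure X} (hfν : ∀ i, Integrable (f i) (ν i))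
    {νbar : Measure X} [IsFiniteMeasure νbar] {a : X} (hνbar : ∫⁻ z, edist a z ^ 2 ∂νbar < ⊤)
    (hW : ∀ i, W2sq (ν i) νbar ≠ ⊤) :
    ∑ i, ∫ x, f i x ∂ν i ≤ 1 / 2 * ∑ i, (W2sq (ν i) νbar).toReal := by
  have : Nonempty X := ⟨a⟩
  have hG := integrable_cTransform hdual hνbar
  have hi : ∀ i, ∫ x, f i x ∂ν i ≤ ∫ y, cTransform (f i) y ∂νbar + (W2sq (ν i) νbar).toReal / 2 :=
    fun i => by
      have := (ENNReal.ofReal_le_iff_le_toReal (hW i)).1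
        (ofReal_two_mul_integral_sub_integral_le_W2sq (hfν i) (hG i) fun x y => by
          linarith [sub_le_cTransform (bddAbove_cTransform hdual i y) x])
      linarith
  have hsum : ∑ i, ∫ y, cTransform (f i) y ∂νbar ≤ 0 := by
    rw [← integral_finsetSum _ fun i _ => hG i]
    exact integral_nonpos (sum_cTransform_nonpos hdual)
  calc ∑ i, ∫ x, f i x ∂ν i
      ≤ ∑ i, (∫ y, cTransform (f i) y ∂νbar + (W2sq (ν i) νbar).toReal / 2) :=
        Finset.sum_le_sum fun i _ => hi i
    _ ≤ 1 / 2 * ∑ i, (W2sq (ν i) νbar).toReal := by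
        rw [Finset.sum_add_distrib, ← Finset.sum_div]
        linarith

end CTransform

section Entropy
variable {X : Type*} [MeasurableSpace X] {m : Measure X} {g U : X → ℝ}

lemma Ent_nonneg (ν : Measure X) [IsProbabilityMeasure m] [IsProbabilityMeasure ν] :
    0 ≤ Ent m ν := by
  unfold Ent
  split_ifs with h
  · have := InformationTheory.integral_llr_add_sub_measure_univ_nonneg h.1 h.2
    simp only [probReal_univ, add_sub_cancel_right] at this
    exact_mod_cast this
  · exact le_top

lemma smul_withDensity_exp_eq_tilted [NeZero m] (hexp : Integrable (fun x => Real.exp (g x)) m) :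
    (∫⁻ x, ENNReal.ofReal (Real.exp (g x)) ∂m)⁻¹ •
      m.withDensity (fun x => ENNReal.ofReal (Real.exp (g x))) = m.tilted g := by
  have hI := integral_exp_pos hexp
  rw [← ofReal_integral_eq_lintegral_ofReal hexp (ae_of_all _ fun x => (Real.exp_pos _).le),
    ← withDensity_smul' _ _ (by simpa using hI), Measure.tilted]
  congr 1
  ext x
  rw [Pi.smul_apply, smul_eq_mul, div_eq_inv_mul, ENNReal.ofReal_mul (inv_nonneg.2 hI.le),
    ENNReal.ofReal_inv_of_pos hI]

lemma integrable_tilted_self_of_le [IsFiniteMeasure m]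
    (hexp : Integrable (fun x => Real.exp (g x)) m) (hU : Integrable U (m.tilted g))
    (hgU : ∀ x, g x ≤ U x) : Integrable g (m.tilted g) := by
  rw [integrable_tilted_iff hexp] at hU ⊢
  have hg : AEMeasurable g m := Real.aemeasurable_of_aemeasurable_exp hexp.1.aemeasurable
  refine Integrable.mono' (hU.norm.add (integrable_const (Real.exp (-1))))
    (hexp.1.mul hg.aestronglyMeasurable) (ae_of_all _ fun x => ?_)
  simp only [Pi.add_apply, smul_eq_mul, norm_mul, Real.norm_eq_abs, abs_of_pos (Real.exp_pos _)]
  rcases le_total 0 (g x) with h | h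
  · rw [abs_of_nonneg h]
    nlinarith [le_abs_self (U x), hgU x, Real.exp_pos (g x), Real.exp_pos (-1)]
  · -- `-t ≤ exp (-t - 1)` gives `exp t * |t| ≤ exp (-1)` for `t ≤ 0`
    have h₁ := Real.add_one_le_exp (-g x - 1)
    have h₂ : Real.exp (g x) * Real.exp (-g x - 1) = Real.exp (-1) := by
      rw [← Real.exp_add]; ring_nf
    rw [abs_of_nonpos h]
    nlinarith [Real.exp_pos (g x), abs_nonneg (U x)]

lemma Ent_tilted [IsFiniteMeasure m] [NeZero m] (hexp : Integrable (fun x => Real.exp (g x)) m)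
    (hg : Integrable g (m.tilted g)) :
    Ent m (m.tilted g)
      = ((∫ x, g x ∂m.tilted g - Real.log (∫ x, Real.exp (g x) ∂m) : ℝ) : EReal) := by
  have hlog : (fun x => Real.log ((m.tilted g).rnDeriv m x).toReal)
      =ᵐ[m.tilted g] fun x => g x - Real.log (∫ x, Real.exp (g x) ∂m) :=
    (tilted_absolutelyContinuous m g).ae_eq (log_rnDeriv_tilted_left_self hexp)
  have hint := (hg.sub (integrable_const (Real.log (∫ x, Real.exp (g x) ∂m)))).congr hlog.symm
  rw [Ent, if_pos ⟨tilted_absolutelyContinuous m g, hint⟩, integral_congr_ae hlog,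
    integral_sub hg (integrable_const _)]
  have := isProbabilityMeasure_tilted hexp
  simp

end Entropy

lemma integrable_tilted_self_of_le_add_dist_sq {X : Type*} [PseudoMetricSpace X] [MeasurableSpace X]
    [OpensMeasurableSpace X] {m : Measure X} [IsFiniteMeasure m] {g : X → ℝ} {a : X} {C : ℝ}
    (hexp : Integrable (fun x => Real.exp (g x)) m) (ha : ∫⁻ z, edist a z ^ 2 ∂m.tilted g < ⊤)
    (hg : ∀ x, g x ≤ C + dist x a ^ 2 / 2) : Integrable g (m.tilted g) :=
  integrable_tilted_self_of_le hexp ((integrable_const C).add ((integrable_dist_sq ha).div_const 2))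
    fun x => by simpa [dist_comm] using hg x

@[norm_cast]
lemma EReal.coe_finset_sum {ι : Type*} (s : Finset ι) (g : ι → ℝ) :
    ((∑ i ∈ s, g i : ℝ) : EReal) = ∑ i ∈ s, (g i : EReal) :=
  map_sum (⟨⟨Real.toEReal, EReal.coe_zero⟩, EReal.coe_add⟩ : ℝ →+ EReal) g s

section Barycenter
variable {X : Type*} [MetricSpace X] [MeasurableSpace X] {ι : Type*} [Fintype ι]
  {ν : ι → Measure X} {νbar : Measure X}

lemma W2sq_lt_top_of_sum_eq_iInf [∀ i, IsProbabilityMeasure (ν i)] {w : ι → ℝ}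
    (hw : ∀ i, 0 < w i) {a : X} (hν : ∀ i, ∫⁻ z, edist a z ^ 2 ∂ν i < ⊤)
    (h : ∑ i, ENNReal.ofReal (w i) * W2sq (ν i) νbar
      = ⨅ ρ : {ρ : Measure X // IsProbabilityMeasure ρ},
          ∑ i, ENNReal.ofReal (w i) * W2sq (ν i) (ρ : Measure X))
    (i : ι) : W2sq (ν i) νbar < ⊤ := by
  have hsum : ∑ i, ENNReal.ofReal (w i) * W2sq (ν i) νbar < ⊤ := by
    rw [h]
    refine (iInf_le _ ⟨Measure.dirac a, inferInstance⟩).trans_lt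
      (ENNReal.sum_lt_top.2 fun i _ => ENNReal.mul_lt_top ENNReal.ofReal_lt_top ?_)
    exact (W2sq_dirac_le _ a).trans_lt (hν i)
  exact ENNReal.lt_top_of_mul_ne_top_right (ENNReal.sum_lt_top.1 hsum i (Finset.mem_univ i)).ne
    (ENNReal.ofReal_pos.2 (hw i)).ne'

lemma half_sum_toReal_W2sq_le_sum_of_Ent_le {m : Measure X} [IsProbabilityMeasure m]
    [IsProbabilityMeasure νbar] {E : ι → ℝ} (hE : ∀ i, Ent m (ν i) = E i)
    (hW : ∀ i, W2sq (ν i) νbar ≠ ⊤) {c : ℝ} (hc : 0 < c)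
    (h : Ent m νbar ≤ ∑ i, (c : EReal) * Ent m (ν i)
      - ((1 / 2 * (∑ i, ENNReal.ofReal c * W2sq (ν i) νbar).toReal : ℝ) : EReal)) :
    1 / 2 * ∑ i, (W2sq (ν i) νbar).toReal ≤ ∑ i, E i := by
  have h₀ := (Ent_nonneg νbar).trans h
  rw [ENNReal.toReal_sum fun i _ => ENNReal.mul_ne_top ENNReal.ofReal_ne_top (hW i)] at h₀
  simp_rw [hE, ENNReal.toReal_mul, ENNReal.toReal_ofReal hc.le, ← EReal.coe_mul,
    ← EReal.coe_finset_sum, ← EReal.coe_sub, EReal.coe_nonneg, ← Finset.mul_sum] at h₀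
  nlinarith

end Barycenter

lemma prod_lintegral_exp_le_one {X : Type*} [MeasurableSpace X] {m : Measure X} [NeZero m]
    {ι : Type*} [Fintype ι] {f : ι → X → ℝ} (hexp : ∀ i, Integrable (fun x => Real.exp (f i x)) m)
    (h : ∑ i, Real.log (∫ x, Real.exp (f i x) ∂m) ≤ 0) :
    ∏ i, ∫⁻ x, ENNReal.ofReal (Real.exp (f i x)) ∂m ≤ 1 := by
  have hI i := integral_exp_pos (hexp i)
  simp_rw [← ofReal_integral_eq_lintegral_ofReal (hexp _)
    (ae_of_all _ fun x => (Real.exp_pos _).le)]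
  rw [← ENNReal.ofReal_prod_of_nonneg fun i _ => (hI i).le, ENNReal.ofReal_le_one]
  calc ∏ i, ∫ x, Real.exp (f i x) ∂m = Real.exp (∑ i, Real.log (∫ x, Real.exp (f i x) ∂m)) := by
        rw [Real.exp_sum]
        exact Finset.prod_congr rfl fun i _ => (Real.exp_log (hI i)).symm
    _ ≤ 1 := Real.exp_le_one_iff.2 h

theorem stmt17_general {X : Type*} [MetricSpace X] [MeasurableSpace X] [BorelSpace X]
    (m : Measure X) [IsProbabilityMeasure m]
    (hBCD : ∀ (j : ℕ) (w : Fin j → ℝ) (ν : Fin j → Measure X),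
      (∀ i, 0 < w i) → (∑ i, w i = 1) → (∀ i, IsProbabilityMeasure (ν i)) →
      (∀ i, ∃ x₀ : X, ∫⁻ z, edist x₀ z ^ 2 ∂(ν i) < ⊤) →
      ∃ νbar : Measure X, IsProbabilityMeasure νbar ∧
        (∑ i, ENNReal.ofReal (w i) * W2sq (ν i) νbar
          = ⨅ ρ : {ρ : Measure X // IsProbabilityMeasure ρ},
              ∑ i, ENNReal.ofReal (w i) * W2sq (ν i) (ρ : Measure X)) ∧
        Ent m νbar ≤ ∑ i, ((w i : ℝ) : EReal) * Ent m (ν i)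
          - ((1 / 2 * (⨅ ρ : {ρ : Measure X // IsProbabilityMeasure ρ},
              ∑ i, ENNReal.ofReal (w i) * W2sq (ν i) (ρ : Measure X)).toReal : ℝ) : EReal))
    (k : ℕ) (f : Fin k → X → ℝ) (hf : ∀ i, Measurable (f i))
    (hfin : ∀ i, ∫⁻ x, ENNReal.ofReal (Real.exp (f i x)) ∂m < ⊤)
    (hmom : ∀ i, ∃ x₀ : X,
      ∫⁻ z, edist x₀ z ^ 2
        ∂((∫⁻ x, ENNReal.ofReal (Real.exp (f i x)) ∂m)⁻¹ •
            m.withDensity (fun x => ENNReal.ofReal (Real.exp (f i x)))) < ⊤)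
    (hdual : ∀ p : Fin k → X, ∀ y : X,
      ∑ i, f i (p i) ≤ 1 / 2 * ∑ i, dist y (p i) ^ 2) :
    ∏ i, ∫⁻ x, ENNReal.ofReal (Real.exp (f i x)) ∂m ≤ 1 := by
  rcases k.eq_zero_or_pos with rfl | hk
  · simp
  obtain ⟨a⟩ := nonempty_of_isProbabilityMeasure m
  have hexp i : Integrable (fun x => Real.exp (f i x)) m :=
    (lintegral_ofReal_ne_top_iff_integrable (by fun_prop)
      (ae_of_all _ fun x => (Real.exp_pos _).le)).1 (hfin i).ne
  have hprob i : IsProbabilityMeasure (m.tilted (f i)) := isProbabilityMeasure_tilted (hexp i)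
  have hmom' i : ∫⁻ z, edist a z ^ 2 ∂m.tilted (f i) < ⊤ := by
    obtain ⟨x₀, hx₀⟩ := hmom i
    rw [smul_withDensity_exp_eq_tilted (hexp i)] at hx₀
    exact lintegral_edist_sq_lt_top_of_lt_top hx₀ a
  have hint i : Integrable (f i) (m.tilted (f i)) :=
    integrable_tilted_self_of_le_add_dist_sq (hexp i) (hmom' i) (C := f i a - ∑ j, f j a)
      fun x => by linarith [le_sub_sum_of_forall_sum_le hdual i x a]
  obtain ⟨νbar, hνbar, hVeq, hEnt⟩ := hBCD k (fun _ => 1 / k) (fun i => m.tilted (f i))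
    (fun _ => by positivity) (by simp [hk.ne']) hprob (fun i => ⟨a, hmom' i⟩)
  have hW := W2sq_lt_top_of_sum_eq_iInf (fun _ => by positivity) hmom' hVeq
  rw [← hVeq] at hEnt
  have hJensen := half_sum_toReal_W2sq_le_sum_of_Ent_le (fun i => Ent_tilted (hexp i) (hint i))
    (fun i => (hW i).ne) (by positivity) hEnt
  have hDuality := sum_integral_le_half_sum_W2sq hdual hint
    (lintegral_edist_sq_lt_top_of_W2sq_lt_top (hmom' ⟨0, hk⟩) (hW ⟨0, hk⟩)) fun i => (hW i).ne
  refine prod_lintegral_exp_le_one hexp ?_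
  rw [Finset.sum_sub_distrib] at hJensen
  linarith

/-- Functional Blaschke–Santaló type inequality in a `BCD(1,∞)` metric measure
space. -/
theorem stmt17 {X : Type*} [MetricSpace X] [MeasurableSpace X] [BorelSpace X]
    (m : Measure X) [IsProbabilityMeasure m]
    (hBCD : ∀ (j : ℕ) (w : Fin j → ℝ) (ν : Fin j → Measure X),
      (∀ i, 0 < w i) → (∑ i, w i = 1) → (∀ i, IsProbabilityMeasure (ν i)) →
      (∀ i, ∃ x₀ : X, ∫⁻ z, edist x₀ z ^ 2 ∂(ν i) < ⊤) →
      ∃ νbar : Measure X, IsProbabilityMeasure νbar ∧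
        (∑ i, ENNReal.ofReal (w i) * W2sq (ν i) νbar
          = ⨅ ρ : {ρ : Measure X // IsProbabilityMeasure ρ},
              ∑ i, ENNReal.ofReal (w i) * W2sq (ν i) (ρ : Measure X)) ∧
        Ent m νbar ≤ ∑ i, ((w i : ℝ) : EReal) * Ent m (ν i)
          - ((1 / 2 * (⨅ ρ : {ρ : Measure X // IsProbabilityMeasure ρ},
              ∑ i, ENNReal.ofReal (w i) * W2sq (ν i) (ρ : Measure X)).toReal : ℝ) : EReal))
    (k : ℕ) (f : Fin k → X → ℝ) (hf : ∀ i, Measurable (f i))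
    (hpos : ∀ i, 0 < ∫⁻ x, ENNReal.ofReal (Real.exp (f i x)) ∂m)
    (hfin : ∀ i, ∫⁻ x, ENNReal.ofReal (Real.exp (f i x)) ∂m < ⊤)
    (hmom : ∀ i, ∃ x₀ : X,
      ∫⁻ z, edist x₀ z ^ 2
        ∂((∫⁻ x, ENNReal.ofReal (Real.exp (f i x)) ∂m)⁻¹ •
            m.withDensity (fun x => ENNReal.ofReal (Real.exp (f i x)))) < ⊤)
    (hdual : ∀ p : Fin k → X, ∀ y : X,
      ∑ i, f i (p i) ≤ 1 / 2 * ∑ i, dist y (p i) ^ 2) :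
    ∏ i, ∫⁻ x, ENNReal.ofReal (Real.exp (f i x)) ∂m ≤ 1 :=
  stmt17_general m hBCD k f hf hfin hmom hdual
end

section
/- Let (X,d) be a metric space, K < 0, N > 0, and (y_t) an EVI_{K,N} gradient flow starting at y, i.e. satisfying e^{Kt}s_{K/N}²(d(y_t,z)/2) − s_{K/N}²(d(y,z)/2) ≤ I_K(t)·(N/2)·(1 − U_N(z)/U_N(y_t)) for all z and t > 0, where U_N ≥ 0. Then for all z and t > 0: c_{K/N}(d(y_t,z)) ≤ e^{−Kt}·c_{K/N}(d(y,z)) + √(−N/K)·(1 − e^{−Kt} − K·e^{−Kt}·I_K(t)), where c_{K/N}(θ) = cosh(√(−K/N)θ), s_{K/N}(θ) = sinh(√(−K/N)θ)/√(−K/N), and I_K(t) = (e^{Kt}−1)/K. -/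
/-!
With `a = √(-K/N)`, the half-angle identity `c_{K/N}(θ) = 1 + 2a² s_{K/N}(θ/2)²` turns the
integral `EVI_{K,N}` inequality, multiplied by `2a² = -2K/N`, into
`e^{Kt} (c_{K/N}(d(y_t,z)) - 1) - (c_{K/N}(d(y,z)) - 1) ≤ (1 - e^{Kt}) (1 - U_N(z)/U_N(y_t))`.
As `1 - e^{Kt} ≥ 0` and `U_N ≥ 0`, the ratio can be dropped, leaving
`e^{Kt} c_{K/N}(d(y_t,z)) ≤ c_{K/N}(d(y,z))`. The correction term of the claimed bound is
identically zero, because `K e^{-Kt} I_K(t) = 1 - e^{-Kt}`.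
-/

open Real

lemma Real.cosh_mul_eq_one_add_sq_sinh_half {a : ℝ} (ha : a ≠ 0) (d : ℝ) :
    cosh (a * d) = 1 + 2 * a ^ 2 * (sinh (a * (d / 2)) / a) ^ 2 := by
  rw [show a * d = 2 * (a * (d / 2)) by ring, cosh_two_mul, cosh_sq]
  field_simp
  ring

lemma Real.exp_mul_sub_one_div_nonneg (K : ℝ) {t : ℝ} (ht : 0 ≤ t) :
    0 ≤ (exp (K * t) - 1) / K := by
  rcases lt_or_ge K 0 with hK | hK
  · exact div_nonneg_of_nonpos
      (sub_nonpos.2 (exp_le_one_iff.2 (mul_nonpos_of_nonpos_of_nonneg hK.le ht))) hK.le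
  · exact div_nonneg (sub_nonneg.2 (one_le_exp_iff.2 (mul_nonneg hK ht))) hK

lemma Real.one_sub_exp_neg_sub_mul_exp_neg_mul_div_eq_zero {K : ℝ} (hK : K ≠ 0) (t : ℝ) :
    1 - exp (-(K * t)) - K * exp (-(K * t)) * ((exp (K * t) - 1) / K) = 0 := by
  rw [exp_neg]
  field_simp
  ring

/-- Distance estimate along an `EVI_{K,N}` gradient flow with `K < 0`:
from the integral `EVI_{K,N}` inequality one deduces
`c_{K/N}(d(y_t,z)) ≤ e^{−Kt} c_{K/N}(d(y,z)) + √(−N/K)(1 − e^{−Kt} − K e^{−Kt} I_K(t))`. -/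
theorem stmt19 {X : Type*} [MetricSpace X] (K N : ℝ) (hK : K < 0) (hN : 0 < N)
    (y : ℝ → X) (y₀ : X) (U : X → ℝ) (hU : ∀ x, 0 ≤ U x)
    (hEVI : ∀ z : X, ∀ t : ℝ, 0 < t →
      Real.exp (K * t) *
          (Real.sinh (Real.sqrt (-(K / N)) * (dist (y t) z / 2)) / Real.sqrt (-(K / N))) ^ 2
        - (Real.sinh (Real.sqrt (-(K / N)) * (dist y₀ z / 2)) / Real.sqrt (-(K / N))) ^ 2
      ≤ ((Real.exp (K * t) - 1) / K) * (N / 2) * (1 - U z / U (y t))) :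
    ∀ z : X, ∀ t : ℝ, 0 < t →
      Real.cosh (Real.sqrt (-(K / N)) * dist (y t) z)
        ≤ Real.exp (-(K * t)) * Real.cosh (Real.sqrt (-(K / N)) * dist y₀ z)
          + Real.sqrt (-(N / K)) *
              (1 - Real.exp (-(K * t)) - K * Real.exp (-(K * t)) * ((Real.exp (K * t) - 1) / K)) := by
  intro z t ht
  have hKN : 0 < -(K / N) := neg_pos.2 (div_neg_of_neg_of_pos hK hN)
  set a := √(-(K / N))
  have ha : a ≠ 0 := (sqrt_pos.2 hKN).ne'
  have ha2 : a ^ 2 = -(K / N) := sq_sqrt hKN.le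
  have hI := exp_mul_sub_one_div_nonneg K ht.le
  have hdrop : exp (K * t) * (sinh (a * (dist (y t) z / 2)) / a) ^ 2
      - (sinh (a * (dist y₀ z / 2)) / a) ^ 2 ≤ (exp (K * t) - 1) / K * (N / 2) :=
    (hEVI z t ht).trans <| mul_le_of_le_one_right (mul_nonneg hI (by positivity)) <|
      sub_le_self _ (div_nonneg (hU z) (hU (y t)))
  have hcosh : exp (K * t) * cosh (a * dist (y t) z) ≤ cosh (a * dist y₀ z) := by
    have hscale : 2 * -(K / N) * ((exp (K * t) - 1) / K * (N / 2)) = 1 - exp (K * t) := by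
      field_simp [hK.ne, hN.ne']
      ring
    rw [cosh_mul_eq_one_add_sq_sinh_half ha, cosh_mul_eq_one_add_sq_sinh_half ha, ha2]
    linear_combination (2 * -(K / N)) * hdrop + hscale
  rw [one_sub_exp_neg_sub_mul_exp_neg_mul_div_eq_zero hK.ne, mul_zero, add_zero, exp_neg,
    le_inv_mul_iff₀ (exp_pos _)]
  exact hcosh
end
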